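/- Every universally null subset of ℝ that has the Baire property is meager. -/

import Mathlib

/-!
If `A` is not meagre, its Baire property yields a Borel set `B ⊆ A` differing from `A` by a meagre
set, so `B` is not meagre and in particular uncountable. An uncountable Borel subset of `ℝ` is
Borel isomorphic to `[0, 1]`, and transporting Lebesgue measure along this isomorphism gives an
atomless probability measure concentrated on `B ⊆ A`, so `A` is not universally null.
-/

open MeasureTheory Set Topology

theorem Set.Countable.isMeagre {X : Type*} [TopologicalSpace X] [T1Space X]
    [∀ x : X, Filter.NeBot (𝓝[≠] x)] {s : Set X} (hs : s.Countable) : IsMeagre s := by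
  have hsingleton (x : X) : IsMeagre ({x} : Set X) := by
    refine IsNowhereDense.isMeagre ?_
    rw [IsNowhereDense, closure_singleton, interior_singleton]
  simpa using isMeagre_biUnion hs fun x _ => hsingleton x

section Borel

variable {X : Type*} [TopologicalSpace X] [MeasurableSpace X] [OpensMeasurableSpace X]

theorem IsMeagre.exists_measurableSet_superset {s : Set X} (hs : IsMeagre s) :
    ∃ t, s ⊆ t ∧ MeasurableSet t ∧ IsMeagre t := by
  obtain ⟨S, hSopen, hSdense, hScount, hS⟩ := mem_residual_iff.mp hs
  refine ⟨(⋂₀ S)ᶜ, subset_compl_comm.mp hS, ?_, ?_⟩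
  · exact (MeasurableSet.sInter hScount fun t ht => (hSopen t ht).measurableSet).compl
  · rw [IsMeagre, compl_compl]
    exact mem_residual_iff.mpr ⟨S, hSopen, hSdense, hScount, subset_rfl⟩

theorem exists_measurableSet_subset_isMeagre_diff {s u : Set X} (hu : MeasurableSet u)
    (hsu : IsMeagre (symmDiff s u)) : ∃ t ⊆ s, MeasurableSet t ∧ IsMeagre (s \ t) := by
  obtain ⟨m, hsum, hm, hmeagre⟩ := hsu.exists_measurableSet_superset
  refine ⟨u \ m, ?_, hu.diff hm, (hmeagre.union hmeagre).mono ?_⟩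
  · rintro x ⟨hxu, hxm⟩
    by_contra hxs
    exact hxm (hsum (Or.inr ⟨hxu, hxs⟩))
  · rintro x ⟨hxs, hxum⟩
    by_cases hxu : x ∈ u
    · exact Or.inr (not_not.mp fun hxm => hxum ⟨hxu, hxm⟩)
    · exact Or.inl (hsum (Or.inl ⟨hxs, hxu⟩))

end Borel

theorem MeasurableEmbedding.nullSingletonClass_map {α β : Type*} [MeasurableSpace α]
    [MeasurableSpace β] {f : α → β} (hf : MeasurableEmbedding f) (μ : Measure α)
    [NullSingletonClass μ] : NullSingletonClass (μ.map f) :=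
  ⟨fun y => by
    rw [hf.map_apply]
    exact (subsingleton_singleton.preimage hf.injective).measure_zero μ⟩

theorem exists_isProbabilityMeasure_nullSingletonClass_of_not_countable {X : Type*}
    [MeasurableSpace X] [StandardBorelSpace X] {t : Set X} (ht : MeasurableSet t)
    (htc : ¬t.Countable) :
    ∃ μ : Measure X, IsProbabilityMeasure μ ∧ NullSingletonClass μ ∧ μ tᶜ = 0 := by
  have := ht.standardBorel
  have hI : ¬Countable unitInterval := fun _ => by
    simpa using countable_univ.measure_zero (volume : Measure unitInterval)
  let e : unitInterval ≃ᵐ t :=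
    PolishSpace.measurableEquivOfNotCountable hI (countable_coe_iff.not.mpr htc)
  have hf : MeasurableEmbedding (Subtype.val ∘ e) :=
    (MeasurableEmbedding.subtype_coe ht).comp e.measurableEmbedding
  refine ⟨volume.map (Subtype.val ∘ e), Measure.isProbabilityMeasure_map hf.measurable.aemeasurable,
    hf.nullSingletonClass_map volume, ?_⟩
  have hpre : Subtype.val ∘ e ⁻¹' tᶜ = ∅ :=
    eq_empty_of_forall_notMem fun x hx => hx (e x).2
  rw [hf.map_apply, hpre, measure_empty]

/-- Every universally null subset of `ℝ` that has the Baire property is meager. -/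
theorem stmt13 (A : Set ℝ)
    (hnull : ∀ μ : Measure ℝ, SigmaFinite μ → (∀ x : ℝ, μ {x} = 0) →
      ∃ N : Set ℝ, MeasurableSet N ∧ A ⊆ N ∧ μ N = 0)
    (hbp : ∃ U : Set ℝ, IsOpen U ∧ IsMeagre (symmDiff A U)) :
    IsMeagre A := by
  by_contra hA
  obtain ⟨U, hU, hAU⟩ := hbp
  obtain ⟨B, hBA, hB, hAB⟩ := exists_measurableSet_subset_isMeagre_diff hU.measurableSet hAU
  have hBc : ¬B.Countable := fun hBc =>
    hA ((hBc.isMeagre.union hAB).mono (sdiff_subset_iff.mp subset_rfl))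
  obtain ⟨μ, hμ, hμatoms, hμB⟩ :=
    exists_isProbabilityMeasure_nullSingletonClass_of_not_countable hB hBc
  obtain ⟨N, -, hAN, hN⟩ := hnull μ inferInstance hμatoms.measure_singleton
  have hNc : μ Nᶜ = 0 := measure_mono_null (compl_subset_compl.mpr (hBA.trans hAN)) hμB
  have hμuniv : μ univ ≤ μ N + μ Nᶜ := measure_univ_le_add_compl N
  simp [hN, hNc] at hμuniv
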